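/- arXiv:1702.04971 — 2 statements merged into one kernel-verified Lean document; each statement's English description precedes it below -/
import Mathlib

section
/- Let e : ℝ → ℝ^d be twice differentiable with e''(t) = −Ω²·e(t) + G·e(t) for all t, e(t₀) = e₀ and e'(t₀) = C_B·b₀ − Ω²·p₀, and let b : ℝ → ℝ^d be differentiable with b'(t) = −C_E·e(t) and b(t₀) = b₀. Assume ‖Ω·e₀‖² ≤ (2/3)H₀, ‖C_B·b₀‖² ≤ (1/3)H₀, ‖Ω²·p₀‖² ≤ (1/3)H₀, ‖C_E·e₀‖² ≤ 2H₀, ‖e₀‖² ≤ H₀ and ‖b₀‖² ≤ H₀. Then for all t with t₀ ≤ t ≤ T one has ‖e(t)‖ ≤ (1 + 2(T − t₀))·√H₀ and ‖b(t)‖ ≤ (1 + 2(T − t₀))·√H₀. -/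
/-!
With `S := Ωᵀ Ω + C_Eᵀ C_E` self-adjoint, the field solves `e'' = -S e`, so the energy
`‖e'‖² + ⟪S e, e⟫ = ‖e'‖² + ‖Ω e‖² + ‖C_E e‖²` is conserved; the initial data bound it by `4 H₀`.
Hence `‖e'‖` and `‖b'‖ = ‖C_E e‖` stay below `2 √H₀`, and the mean value inequality integrates
these from `‖e₀‖, ‖b₀‖ ≤ √H₀`.
-/

noncomputable def mulE {d : ℕ} (A : Matrix (Fin d) (Fin d) ℝ)
    (v : EuclideanSpace ℝ (Fin d)) : EuclideanSpace ℝ (Fin d) :=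
  (WithLp.equiv 2 (Fin d → ℝ)).symm (A.mulVec ((WithLp.equiv 2 (Fin d → ℝ)) v))

open RealInnerProductSpace Matrix

lemma mulE_eq_toEuclideanCLM {d : ℕ} (A : Matrix (Fin d) (Fin d) ℝ)
    (v : EuclideanSpace ℝ (Fin d)) : mulE A v = toEuclideanCLM (𝕜 := ℝ) A v := rfl

lemma inner_toEuclideanCLM_transpose_mul_self {n : Type*} [Fintype n] [DecidableEq n]
    (A : Matrix n n ℝ) (x : EuclideanSpace ℝ n) :
    ⟪toEuclideanCLM (𝕜 := ℝ) (Aᵀ * A) x, x⟫ = ‖toEuclideanCLM (𝕜 := ℝ) A x‖ ^ 2 := by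
  rw [← conjTranspose_eq_transpose_of_trivial, ← star_eq_conjTranspose, map_mul, map_star,
    ContinuousLinearMap.star_eq_adjoint, mul_apply_eq_comp,
    ContinuousLinearMap.adjoint_inner_left, real_inner_self_eq_norm_sq]

lemma isSelfAdjoint_transpose_mul_self {n : Type*} [Fintype n] (A : Matrix n n ℝ) :
    IsSelfAdjoint (Aᵀ * A) := by
  have := IsSelfAdjoint.star_mul_self A
  rwa [star_eq_conjTranspose, conjTranspose_eq_transpose_of_trivial] at this

theorem IsSelfAdjoint.energy_conserved {E : Type*} [NormedAddCommGroup E] [InnerProductSpace ℝ E]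
    [CompleteSpace E] {S : E →L[ℝ] E} (hS : IsSelfAdjoint S) {e ed : ℝ → E}
    (he : ∀ t, HasDerivAt e (ed t) t) (hed : ∀ t, HasDerivAt ed (-S (e t)) t) (t s : ℝ) :
    ‖ed t‖ ^ 2 + ⟪S (e t), e t⟫ = ‖ed s‖ ^ 2 + ⟪S (e s), e s⟫ := by
  have hderiv : ∀ t, HasDerivAt (fun t ↦ ‖ed t‖ ^ 2 + ⟪S (e t), e t⟫) 0 t := by
    intro t
    refine ((hed t).norm_sq.add
      ((S.hasFDerivAt.comp_hasDerivAt t (he t)).inner ℝ (he t))).congr_deriv ?_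
    have hsymm : ⟪S (ed t), e t⟫ = ⟪ed t, S (e t)⟫ := hS.isSymmetric (ed t) (e t)
    rw [Function.comp_apply, hsymm, inner_neg_right, real_inner_comm (ed t)]
    ring
  exact is_const_of_deriv_eq_zero (fun t ↦ (hderiv t).differentiableAt)
    (fun t ↦ (hderiv t).deriv) t s

lemma norm_le_add_mul_of_norm_deriv_le {E : Type*} [NormedAddCommGroup E] [NormedSpace ℝ E]
    {f f' : ℝ → E} {C a t : ℝ} (hf : ∀ s, HasDerivAt f (f' s) s) (bound : ∀ s, ‖f' s‖ ≤ C)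
    (hat : a ≤ t) : ‖f t‖ ≤ ‖f a‖ + C * (t - a) := by
  have := norm_image_sub_le_of_norm_deriv_le_segment' (fun s _ ↦ (hf s).hasDerivWithinAt)
    (fun s _ ↦ bound s) t (Set.right_mem_Icc.2 hat)
  calc ‖f t‖ = ‖f a + (f t - f a)‖ := by rw [add_sub_cancel]
    _ ≤ ‖f a‖ + ‖f t - f a‖ := norm_add_le _ _
    _ ≤ ‖f a‖ + C * (t - a) := by gcongr

lemma norm_sub_sq_le {E : Type*} [SeminormedAddCommGroup E] (x y : E) :
    ‖x - y‖ ^ 2 ≤ 2 * (‖x‖ ^ 2 + ‖y‖ ^ 2) :=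
  (pow_le_pow_left₀ (norm_nonneg _) (norm_sub_le x y) 2).trans add_sq_le

lemma norm_le_two_mul_sqrt_of_sq_le {E : Type*} [SeminormedAddCommGroup E] {x : E} {c : ℝ}
    (h : ‖x‖ ^ 2 ≤ 4 * c) : ‖x‖ ≤ 2 * √c := by
  have hc : 0 ≤ c := by nlinarith [sq_nonneg ‖x‖]
  rw [← pow_le_pow_iff_left₀ (norm_nonneg x) (by positivity) two_ne_zero, mul_pow,
    Real.sq_sqrt hc]
  linarith

theorem stmt7_general
    (d : ℕ)
    (CE CB : Matrix (Fin d) (Fin d) ℝ) (hCB : CB = CE.transpose)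
    (ωv : Fin d → ℝ)
    (t0 T H0 : ℝ)
    (p0 e0 b0 : EuclideanSpace ℝ (Fin d))
    (e ed b : ℝ → EuclideanSpace ℝ (Fin d))
    (he : ∀ t, HasDerivAt e (ed t) t)
    (hed : ∀ t, HasDerivAt ed
      (-mulE ((Matrix.diagonal ωv)^2) (e t) + mulE (-(CB * CE)) (e t)) t)
    (hb : ∀ t, HasDerivAt b (-mulE CE (e t)) t)
    (hinite : e t0 = e0)
    (hinited : ed t0 = mulE CB b0 - mulE ((Matrix.diagonal ωv)^2) p0)
    (hinitb : b t0 = b0)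
    (hΩe0 : ‖mulE (Matrix.diagonal ωv) e0‖^2 ≤ (2/3) * H0)
    (hCBb0 : ‖mulE CB b0‖^2 ≤ (1/3) * H0)
    (hΩ2p0 : ‖mulE ((Matrix.diagonal ωv)^2) p0‖^2 ≤ (1/3) * H0)
    (hCEe0 : ‖mulE CE e0‖^2 ≤ 2 * H0)
    (he0 : ‖e0‖^2 ≤ H0)
    (hb0 : ‖b0‖^2 ≤ H0) :
    ∀ t : ℝ, t0 ≤ t → t ≤ T →
      ‖e t‖ ≤ (1 + 2 * (T - t0)) * Real.sqrt H0 ∧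
      ‖b t‖ ≤ (1 + 2 * (T - t0)) * Real.sqrt H0 := by
  intro t ht0 htT
  set Ω := diagonal ωv
  set S := toEuclideanCLM (𝕜 := ℝ) (Ωᵀ * Ω + CEᵀ * CE)
  have hS : IsSelfAdjoint S :=
    ((isSelfAdjoint_transpose_mul_self Ω).add (isSelfAdjoint_transpose_mul_self CE)).map _
  have hquad (x) : ⟪S x, x⟫ = ‖mulE Ω x‖ ^ 2 + ‖mulE CE x‖ ^ 2 := by
    simp only [S, map_add, _root_.add_apply, inner_add_left,
      inner_toEuclideanCLM_transpose_mul_self, mulE_eq_toEuclideanCLM]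
  have hed' (s) : HasDerivAt ed (-S (e s)) s := by
    convert hed s using 1
    simp only [S, Ω, hCB, diagonal_transpose, sq, mulE_eq_toEuclideanCLM, map_add, map_neg,
      _root_.add_apply, _root_.neg_apply, neg_add]
  have henergy (s) : ‖ed s‖ ^ 2 + ‖mulE Ω (e s)‖ ^ 2 + ‖mulE CE (e s)‖ ^ 2 ≤ 4 * H0 := by
    have := hS.energy_conserved he hed' s t0
    rw [hquad, hquad, hinite, hinited] at this
    linarith [norm_sub_sq_le (mulE CB b0) (mulE (Ω ^ 2) p0)]
  have hed_le (s) : ‖ed s‖ ≤ 2 * √H0 :=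
    norm_le_two_mul_sqrt_of_sq_le (by nlinarith [henergy s])
  have hb'_le (s) : ‖-mulE CE (e s)‖ ≤ 2 * √H0 :=
    norm_le_two_mul_sqrt_of_sq_le (by rw [norm_neg]; nlinarith [henergy s])
  have hgrowth : 2 * √H0 * (t - t0) ≤ 2 * √H0 * (T - t0) := by gcongr
  have he0' : ‖e0‖ ≤ √H0 := Real.le_sqrt_of_sq_le he0
  have hb0' : ‖b0‖ ≤ √H0 := Real.le_sqrt_of_sq_le hb0
  have he_le := norm_le_add_mul_of_norm_deriv_le he hed_le ht0
  have hb_le := norm_le_add_mul_of_norm_deriv_le hb hb'_le ht0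
  rw [hinite] at he_le
  rw [hinitb] at hb_le
  constructor <;> linarith

/-- Stability bounds for the electric field and the magnetic flux:
for the exact solution of `e'' = −Ω²·e + G·e`, `b' = −C_E·e` with the stated initial
data bounds, one has `‖e(t)‖ ≤ (1 + 2(T − t₀))·√H₀` and `‖b(t)‖ ≤ (1 + 2(T − t₀))·√H₀`
for all `t₀ ≤ t ≤ T`. -/
theorem stmt7
    (d : ℕ) (hd : 1 ≤ d)
    (CE CB : Matrix (Fin d) (Fin d) ℝ) (hCB : CB = CE.transpose)
    (ωv : Fin d → ℝ) (hωv : ∀ i, 0 ≤ ωv i)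
    (t0 T H0 : ℝ) (hH0 : 0 < H0) (hT : t0 < T)
    (p0 e0 b0 : EuclideanSpace ℝ (Fin d))
    (e ed b : ℝ → EuclideanSpace ℝ (Fin d))
    (he : ∀ t, HasDerivAt e (ed t) t)
    (hed : ∀ t, HasDerivAt ed
      (-mulE ((Matrix.diagonal ωv)^2) (e t) + mulE (-(CB * CE)) (e t)) t)
    (hb : ∀ t, HasDerivAt b (-mulE CE (e t)) t)
    (hinite : e t0 = e0)
    (hinited : ed t0 = mulE CB b0 - mulE ((Matrix.diagonal ωv)^2) p0)
    (hinitb : b t0 = b0)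
    (hΩe0 : ‖mulE (Matrix.diagonal ωv) e0‖^2 ≤ (2/3) * H0)
    (hCBb0 : ‖mulE CB b0‖^2 ≤ (1/3) * H0)
    (hΩ2p0 : ‖mulE ((Matrix.diagonal ωv)^2) p0‖^2 ≤ (1/3) * H0)
    (hCEe0 : ‖mulE CE e0‖^2 ≤ 2 * H0)
    (he0 : ‖e0‖^2 ≤ H0)
    (hb0 : ‖b0‖^2 ≤ H0) :
    ∀ t : ℝ, t0 ≤ t → t ≤ T →
      ‖e t‖ ≤ (1 + 2 * (T - t0)) * Real.sqrt H0 ∧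
      ‖b t‖ ≤ (1 + 2 * (T - t0)) * Real.sqrt H0 :=
  stmt7_general d CE CB hCB ωv t0 T H0 p0 e0 b0 e ed b he hed hb hinite hinited hinitb hΩe0 hCBb0
    hΩ2p0 hCEe0 he0 hb0
end

section
/- Variation of constants formula: let e : ℝ → ℝ^d be twice differentiable with e''(s) = −Ω²·e(s) + G·e(s) for all s, where G is any real d×d matrix and Ω is diagonal. Then for all t, t' ∈ ℝ: e(t) = cos((t − t')Ω)·e(t') + (t − t')·sinc((t − t')Ω)·e'(t') + (t − t')·∫₀¹ (t − t')(1 − ξ)·sinc((t − t')(1 − ξ)Ω)·G·e(t'(1 − ξ) + t·ξ) dξ, and e'(t) = −Ω·sin((t − t')Ω)·e(t') + cos((t − t')Ω)·e'(t') + (t − t')·∫₀¹ cos((t − t')(1 − ξ)Ω)·G·e(t'(1 − ξ) + t·ξ) dξ. -/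
/-!
Because `Ω` is diagonal, the system splits into the scalar equations `u'' = -ω² u + g` with
the continuous forcing `g = (G e)ᵢ`. With `c x = cos (x ω)` and `S x = x sinc (x ω)` one has
`S' = c`, `c' = -ω² S`, so `s ↦ c (t - s) u s + S (t - s) u' s` and
`s ↦ -ω² S (t - s) u s + c (t - s) u' s` have derivatives `S (t - s) g s` and `c (t - s) g s`.
Integrating from `t'` to `t` and substituting `s = t' (1 - ξ) + t ξ` gives both formulas.
-/

noncomputable def sinc (z : ℝ) : ℝ := if z = 0 then 1 else Real.sin z / z

noncomputable def fDiag {d : ℕ} (f : ℝ → ℝ) (s : ℝ) (ωv : Fin d → ℝ) :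
    Matrix (Fin d) (Fin d) ℝ :=
  Matrix.diagonal fun i => f (s * ωv i)

@[fun_prop]
theorem continuous_sinc : Continuous sinc := Real.continuous_sinc

theorem mul_sinc_mul (x ω : ℝ) :
    x * sinc (x * ω) = if ω = 0 then x else Real.sin (x * ω) / ω := by
  rcases eq_or_ne ω 0 with rfl | hω
  · simp [sinc]
  rcases eq_or_ne x 0 with rfl | hx
  · simp
  rw [sinc, if_neg (mul_ne_zero hx hω), if_neg hω]
  field_simp

theorem hasDerivAt_mul_sinc_mul (ω x : ℝ) :
    HasDerivAt (fun x => x * sinc (x * ω)) (Real.cos (x * ω)) x := by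
  simp only [mul_sinc_mul]
  rcases eq_or_ne ω 0 with rfl | hω
  · simpa using hasDerivAt_id' x
  · simp only [if_neg hω]
    exact ((hasDerivAt_mul_const ω).sin.div_const ω).congr_deriv (by field_simp)

theorem mul_sin_mul (ω x : ℝ) : ω * Real.sin (x * ω) = ω ^ 2 * (x * sinc (x * ω)) := by
  rw [mul_sinc_mul]
  split_ifs with hω
  · simp [hω]
  · field_simp

theorem hasDerivAt_cos_mul (ω x : ℝ) :
    HasDerivAt (fun x => Real.cos (x * ω)) (-ω ^ 2 * (x * sinc (x * ω))) x :=
  (hasDerivAt_mul_const ω).cos.congr_deriv (by linear_combination -mul_sin_mul ω x)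

section VariationOfConstants

variable {k : ℝ} {c S u v g : ℝ → ℝ}
  (hS : ∀ x, HasDerivAt S (c x) x) (hc : ∀ x, HasDerivAt c (-k * S x) x)
  (hu : ∀ s, HasDerivAt u (v s) s) (hv : ∀ s, HasDerivAt v (-k * u s + g s) s)
include hS hc hu hv

theorem variation_of_constants (hc0 : c 0 = 1) (hS0 : S 0 = 0) (hg : Continuous g)
    (t t' : ℝ) :
    u t = c (t - t') * u t' + S (t - t') * v t' + ∫ s in t'..t, S (t - s) * g s := by
  have hF (s : ℝ) : HasDerivAt (fun s => c (t - s) * u s + S (t - s) * v s)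
      (S (t - s) * g s) s :=
    (((hc (t - s)).comp_const_sub t s).mul (hu s)).add
      (((hS (t - s)).comp_const_sub t s).mul (hv s)) |>.congr_deriv (by ring)
  have hSc : Continuous S := continuous_iff_continuousAt.2 fun x => (hS x).continuousAt
  have := intervalIntegral.integral_eq_sub_of_hasDerivAt (fun s _ => hF s)
    (((hSc.comp (continuous_const.sub continuous_id)).mul hg).intervalIntegrable t' t)
  simp only [sub_self, hc0, hS0] at this
  linarith

theorem variation_of_constants_deriv (hc0 : c 0 = 1) (hS0 : S 0 = 0) (hg : Continuous g)
    (t t' : ℝ) :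
    v t = -k * S (t - t') * u t' + c (t - t') * v t' + ∫ s in t'..t, c (t - s) * g s := by
  have hF (s : ℝ) : HasDerivAt (fun s => -k * S (t - s) * u s + c (t - s) * v s)
      (c (t - s) * g s) s :=
    ((((hS (t - s)).comp_const_sub t s).const_mul (-k)).mul (hu s)).add
      (((hc (t - s)).comp_const_sub t s).mul (hv s)) |>.congr_deriv (by ring)
  have hcc : Continuous c := continuous_iff_continuousAt.2 fun x => (hc x).continuousAt
  have := intervalIntegral.integral_eq_sub_of_hasDerivAt (fun s _ => hF s)
    (((hcc.comp (continuous_const.sub continuous_id)).mul hg).intervalIntegrable t' t)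
  simp only [sub_self, hc0, hS0] at this
  linarith

end VariationOfConstants

theorem intervalIntegral.sub_smul_integral_unitInterval {E : Type*} [NormedAddCommGroup E]
    [NormedSpace ℝ E] (f : ℝ → E) (a b : ℝ) :
    (b - a) • ∫ ξ in (0 : ℝ)..1, f (a * (1 - ξ) + b * ξ) = ∫ s in a..b, f s := by
  have h (ξ : ℝ) : a * (1 - ξ) + b * ξ = (b - a) * ξ + a := by ring
  simp only [h, intervalIntegral.smul_integral_comp_mul_add]
  norm_num

section PiLp

variable {ι : Type*} [Fintype ι] {E : ι → Type*} [∀ i, NormedAddCommGroup (E i)]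
  {q : ENNReal} [Fact (1 ≤ q)]

theorem HasDerivAt.piLp_apply [∀ i, NormedSpace ℝ (E i)] {f : ℝ → PiLp q E} {f' : PiLp q E}
    {x : ℝ} (h : HasDerivAt f f' x) (i : ι) : HasDerivAt (fun x => f x i) (f' i) x :=
  (PiLp.hasFDerivAt_apply q (f x) i).comp_hasDerivAt x h

theorem intervalIntegral.eval_integral_piLp [∀ i, NormedSpace ℝ (E i)]
    [∀ i, CompleteSpace (E i)] {f : ℝ → PiLp q E} {a b : ℝ} {μ : MeasureTheory.Measure ℝ}
    (hf : ∀ i, IntervalIntegrable (f · i) μ a b) (i : ι) :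
    (∫ x in a..b, f x ∂μ) i = ∫ x in a..b, f x i ∂μ := by
  simp only [intervalIntegral, PiLp.sub_apply,
    MeasureTheory.eval_integral_piLp (fun i => (hf i).1),
    MeasureTheory.eval_integral_piLp (fun i => (hf i).2)]

end PiLp

section mulE

variable {d : ℕ}

theorem mulE_diagonal_apply (w : Fin d → ℝ) (v : EuclideanSpace ℝ (Fin d)) (i : Fin d) :
    mulE (Matrix.diagonal w) v i = w i * v i := by
  simp [mulE, Matrix.mulVec_diagonal]

@[fun_prop]
theorem continuous_mulE (A : Matrix (Fin d) (Fin d) ℝ) : Continuous (mulE A) :=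
  (Matrix.toEuclideanLin A).continuous_of_finiteDimensional

end mulE

theorem stmt8_general
    (d : ℕ)
    (G : Matrix (Fin d) (Fin d) ℝ)
    (ωv : Fin d → ℝ)
    (e ed : ℝ → EuclideanSpace ℝ (Fin d))
    (he : ∀ s, HasDerivAt e (ed s) s)
    (hed : ∀ s, HasDerivAt ed
      (-mulE ((Matrix.diagonal ωv)^2) (e s) + mulE G (e s)) s) :
    ∀ t t' : ℝ,
      e t = mulE (fDiag Real.cos (t - t') ωv) (e t')
          + (t - t') • mulE (fDiag sinc (t - t') ωv) (ed t')
          + (t - t') • ∫ ξ in (0:ℝ)..1,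
              ((t - t') * (1 - ξ)) •
                mulE (fDiag sinc ((t - t') * (1 - ξ)) ωv)
                  (mulE G (e (t' * (1 - ξ) + t * ξ))) ∧
      ed t = -mulE (Matrix.diagonal fun i => ωv i * Real.sin ((t - t') * ωv i)) (e t')
          + mulE (fDiag Real.cos (t - t') ωv) (ed t')
          + (t - t') • ∫ ξ in (0:ℝ)..1,
              mulE (fDiag Real.cos ((t - t') * (1 - ξ)) ωv)
                (mulE G (e (t' * (1 - ξ) + t * ξ))) := by
  intro t t'
  have hu (i : Fin d) (s : ℝ) : HasDerivAt (fun s => e s i) (ed s i) s := (he s).piLp_apply i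
  have hv (i : Fin d) (s : ℝ) :
      HasDerivAt (fun s => ed s i) (-(ωv i ^ 2) * e s i + mulE G (e s) i) s := by
    simpa [sq, Matrix.diagonal_mul_diagonal, mulE_diagonal_apply] using (hed s).piLp_apply i
  have he_cont : Continuous e := continuous_iff_continuousAt.2 fun s => (he s).continuousAt
  have hσ (ξ : ℝ) : t - (t' * (1 - ξ) + t * ξ) = (t - t') * (1 - ξ) := by ring
  have hsubst_sinc := intervalIntegral.sub_smul_integral_unitInterval
    (fun s => (t - s) • mulE (fDiag sinc (t - s) ωv) (mulE G (e s))) t' t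
  have hsubst_cos := intervalIntegral.sub_smul_integral_unitInterval
    (fun s => mulE (fDiag Real.cos (t - s) ωv) (mulE G (e s))) t' t
  simp only [hσ] at hsubst_sinc hsubst_cos
  rw [hsubst_sinc, hsubst_cos]
  constructor <;> ext i <;> rw [PiLp.add_apply, PiLp.add_apply,
    intervalIntegral.eval_integral_piLp fun j => Continuous.intervalIntegrable
      (by simp only [fDiag, PiLp.smul_apply, mulE_diagonal_apply]; fun_prop) _ _]
  · simpa [fDiag, mulE_diagonal_apply, mul_assoc] using variation_of_constants
      (hasDerivAt_mul_sinc_mul (ωv i)) (hasDerivAt_cos_mul (ωv i)) (hu i) (hv i)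
      (by simp) (by simp) (by fun_prop) t t'
  · simpa [fDiag, mulE_diagonal_apply, mul_sin_mul, mul_assoc] using
      variation_of_constants_deriv
      (hasDerivAt_mul_sinc_mul (ωv i)) (hasDerivAt_cos_mul (ωv i)) (hu i) (hv i)
      (by simp) (by simp) (by fun_prop) t t'

/-- Variation of constants formula: for a solution of
`e'' = −Ω²·e + G·e` (with `G` an arbitrary real `d×d` matrix and `Ω` diagonal with
nonnegative entries), for all `t, t'`:
`e(t) = cos((t−t')Ω)·e(t') + (t−t')·sinc((t−t')Ω)·e'(t')
      + (t−t')·∫₀¹ (t−t')(1−ξ)·sinc((t−t')(1−ξ)Ω)·G·e(t'(1−ξ)+tξ) dξ`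
and
`e'(t) = −Ω·sin((t−t')Ω)·e(t') + cos((t−t')Ω)·e'(t')
      + (t−t')·∫₀¹ cos((t−t')(1−ξ)Ω)·G·e(t'(1−ξ)+tξ) dξ`. -/
theorem stmt8
    (d : ℕ) (hd : 1 ≤ d)
    (G : Matrix (Fin d) (Fin d) ℝ)
    (ωv : Fin d → ℝ) (hωv : ∀ i, 0 ≤ ωv i)
    (e ed : ℝ → EuclideanSpace ℝ (Fin d))
    (he : ∀ s, HasDerivAt e (ed s) s)
    (hed : ∀ s, HasDerivAt ed
      (-mulE ((Matrix.diagonal ωv)^2) (e s) + mulE G (e s)) s) :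
    ∀ t t' : ℝ,
      e t = mulE (fDiag Real.cos (t - t') ωv) (e t')
          + (t - t') • mulE (fDiag sinc (t - t') ωv) (ed t')
          + (t - t') • ∫ ξ in (0:ℝ)..1,
              ((t - t') * (1 - ξ)) •
                mulE (fDiag sinc ((t - t') * (1 - ξ)) ωv)
                  (mulE G (e (t' * (1 - ξ) + t * ξ))) ∧
      ed t = -mulE (Matrix.diagonal fun i => ωv i * Real.sin ((t - t') * ωv i)) (e t')
          + mulE (fDiag Real.cos (t - t') ωv) (ed t')
          + (t - t') • ∫ ξ in (0:ℝ)..1,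
              mulE (fDiag Real.cos ((t - t') * (1 - ξ)) ωv)
                (mulE G (e (t' * (1 - ξ) + t * ξ))) :=
  stmt8_general d G ωv e ed he hed
end
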